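/- arXiv:1612.04319 — 4 statements merged into one kernel-verified Lean document; each statement's English description precedes it below -/
import Mathlib

section
/- If χ(G) = k and d < k/2, then for any partition of V into d classes, the number of edges of G with both endpoints in the same class is at least k²/(4d). -/
/-!
Colour each class `Vᵢ` optimally with `mᵢ = χ(G[Vᵢ])` colours. Giving the classes disjoint
palettes yields a colouring of `G`, so `k ≤ ∑ mᵢ`. In an optimal colouring any two colour
classes are joined by an edge, so `G[Vᵢ]` has at least `C(mᵢ, 2)` edges, all of them
monochromatic. Convexity of `x ↦ C(x, 2)` (Cauchy–Schwarz) bounds `∑ C(mᵢ, 2)` below in terms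
of `∑ mᵢ ≥ k > 2d`.
-/

open Finset SimpleGraph

namespace SimpleGraph

variable {V : Type*} {G : SimpleGraph V}

theorem chromaticNumber_toNat_choose_two_le_card_edgeFinset [Fintype V] [DecidableRel G.Adj] :
    G.chromaticNumber.toNat.choose 2 ≤ #G.edgeFinset := by
  set m := G.chromaticNumber.toNat
  obtain ⟨C⟩ : G.Colorable m := G.colorable_chromaticNumber_of_fintype
  have hm : (m : ℕ∞) = G.chromaticNumber :=
    ENat.natCast_toNat (chromaticNumber_ne_top_iff_exists.2 ⟨_, G.colorable_of_fintype⟩)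
  -- `C` maps `G` homomorphically onto the graph of colour pairs joined by an edge, which
  -- therefore needs `m` colours on its `m` vertices and is complete.
  have hQ : fromEdgeSet (Sym2.map C '' G.edgeSet) = ⊤ := by
    refine eq_top_of_chromaticNumber_eq_card (le_antisymm chromaticNumber_le_card ?_)
    rw [Fintype.card_fin, hm]
    exact chromaticNumber_mono_of_hom ⟨C, fun {u v} huv => ⟨⟨s(u, v), huv, rfl⟩, C.valid huv⟩⟩
  calc m.choose 2 = #(⊤ : SimpleGraph (Fin m)).edgeFinset := by
        rw [card_edgeFinset_top_eq_card_choose_two, Fintype.card_fin]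
    _ ≤ #(G.edgeFinset.image (Sym2.map C)) := card_le_card fun e he => by
        rw [mem_edgeFinset, ← hQ, edgeSet_fromEdgeSet] at he
        simpa using he.1
    _ ≤ #G.edgeFinset := card_image_le

theorem colorable_sum_of_colorable_induce {ι : Type*} [Fintype ι] (c : V → ι) {n : ι → ℕ}
    (h : ∀ i, (G.induce {v | c v = i}).Colorable (n i)) : G.Colorable (∑ i, n i) := by
  have C i := (h i).some
  have valid : ∀ {u v}, G.Adj u v → ∀ i j (hu : c u = i) (hv : c v = j), i = j →
      ¬HEq (C i ⟨u, hu⟩) (C j ⟨v, hv⟩) := by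
    rintro u v huv i _ hu hv rfl hC
    exact (C i).valid (show (G.induce _).Adj ⟨u, hu⟩ ⟨v, hv⟩ from huv) (eq_of_heq hC)
  simpa using (Coloring.mk (fun v => (⟨c v, C (c v) ⟨v, rfl⟩⟩ : Σ i, Fin (n i)))
    fun huv hC => (Sigma.mk.inj_iff.mp hC).elim (valid huv _ _ rfl rfl)).colorable

theorem sum_card_edgeFinset_induce_le_card_filter_isDiag [Fintype V] [DecidableRel G.Adj]
    {ι : Type*} [Fintype ι] [DecidableEq ι] (c : V → ι) :
    ∑ i, #(G.induce {v | c v = i}).edgeFinset ≤ #{e ∈ G.edgeFinset | (e.map c).IsDiag} := by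
  classical
  calc ∑ i, #(G.induce {v | c v = i}).edgeFinset
      = ∑ i, #(G.edgeFinset ∩ {v | c v = i}.toFinset.sym2) := by
        refine sum_congr rfl fun i _ => ?_
        rw [← map_edgeFinset_induce, card_map]
    _ = #(univ.biUnion fun i => G.edgeFinset ∩ {v | c v = i}.toFinset.sym2) := by
        refine (card_biUnion fun i _ j _ hij => ?_).symm
        rw [Function.onFun, Finset.disjoint_left]
        simp only [mem_inter, mem_sym2_iff, Set.mem_toFinset, Set.mem_ofPred_eq]
        rintro e ⟨-, hi⟩ ⟨-, hj⟩
        exact hij ((hi _ e.out_fst_mem).symm.trans (hj _ e.out_fst_mem))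
    _ ≤ #{e ∈ G.edgeFinset | (e.map c).IsDiag} :=
        card_le_card <| biUnion_subset.2 fun i _ e he => by
          induction e using Sym2.ind with
          | _ u v =>
            simp only [mem_inter, mk_mem_sym2_iff, Set.mem_toFinset, Set.mem_ofPred_eq] at he
            simp [he.1, he.2.1, he.2.2]

end SimpleGraph

theorem sq_div_le_sum_choose_two {ι : Type*} [Fintype ι] (m : ι → ℕ) {k : ℕ}
    (hk : k ≤ ∑ i, m i) (hι : 2 * Fintype.card ι ≤ k) :
    (k : ℝ) ^ 2 / (4 * Fintype.card ι) ≤ ∑ i, ((m i).choose 2 : ℝ) := by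
  rcases eq_or_ne (Fintype.card ι) 0 with hd | hd
  · rw [hd, Nat.cast_zero, mul_zero, div_zero]
    positivity
  have hkS : (k : ℝ) ≤ ∑ i, (m i : ℝ) := by exact_mod_cast hk
  have hdk : 2 * (Fintype.card ι : ℝ) ≤ k := by exact_mod_cast hι
  set d : ℝ := (Fintype.card ι : ℝ)
  set S : ℝ := ∑ i, (m i : ℝ)
  have hCS : S ^ 2 ≤ d * ∑ i, (m i : ℝ) ^ 2 := by
    simpa using sq_sum_le_card_mul_sum_sq (s := univ) (f := fun i => (m i : ℝ))
  have hchoose : 2 * ∑ i, ((m i).choose 2 : ℝ) = ∑ i, (m i : ℝ) ^ 2 - S := by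
    simp only [S, mul_sum, ← sum_sub_distrib, Nat.cast_choose_two]
    exact sum_congr rfl fun i _ => by ring
  rw [div_le_iff₀ (by positivity)]
  -- `2 ∑ C(mᵢ, 2) ≥ S²/d - S = S(S - d)/d ≥ k(k - d)/d ≥ k²/(2d)`, using `S ≥ k ≥ 2d`.
  nlinarith [mul_le_mul hkS hkS (by positivity) (by linarith)]

attribute [local instance] Classical.propDecidable

/-- If `χ(G) = k` and `d < k/2`, then for any partition of `V` into `d` classes
(given by a coloring `c : V → Fin d`), the number of edges of `G` with both
endpoints in the same class is at least `k²/(4d)`. -/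
theorem stmt_2 {V : Type*} [Fintype V] (G : SimpleGraph V) (k d : ℕ)
    (hk : G.chromaticNumber = k) (hd : 2 * d < k) (c : V → Fin d) :
    (k : ℝ) ^ 2 / (4 * d) ≤
      ((G.edgeFinset.filter (fun e => (e.map c).IsDiag)).card : ℝ) := by
  set m : Fin d → ℕ := fun i => (G.induce {v | c v = i}).chromaticNumber.toNat
  have hkm : k ≤ ∑ i, m i := by
    have hcol : G.Colorable (∑ i, m i) :=
      colorable_sum_of_colorable_induce c fun i => colorable_chromaticNumber_of_fintype _
    exact_mod_cast hk ▸ hcol.chromaticNumber_le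
  have hedges : ∑ i, (m i).choose 2 ≤ #{e ∈ G.edgeFinset | (e.map c).IsDiag} :=
    (sum_le_sum fun i _ => chromaticNumber_toNat_choose_two_le_card_edgeFinset).trans
      (sum_card_edgeFinset_induce_le_card_filter_isDiag c)
  calc (k : ℝ) ^ 2 / (4 * d) = (k : ℝ) ^ 2 / (4 * Fintype.card (Fin d)) := by
        rw [Fintype.card_fin]
    _ ≤ ∑ i, ((m i).choose 2 : ℝ) := sq_div_le_sum_choose_two m hkm (by simpa using hd.le)
    _ ≤ _ := by exact_mod_cast hedges
end

section
/- If G is an n-vertex graph with χ(G) = k and n ≤ Ck for some C ≥ 1, then the expected chromatic number of the random subgraph G_{1/2} is at least k/(8C log k). -/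
/-!
Let `b = ⌊k / (4 C log k)⌋`. For a map `σ : V → Fin b`, the classes of `σ` induce graphs with
chromatic numbers `cᵢ` summing to at least `k`, and a graph of chromatic number `c` has at
least `c (c - 1) / 2` edges; by Cauchy–Schwarz `σ` has at least `(k - b)² / (2 b)`
monochromatic edges. Such a `σ` colours `G_{1/2}` properly only if all of these edges are
deleted, so a union bound over the `bⁿ` maps shows that `G_{1/2}` is `b`-colourable with
probability at most `bⁿ 2^(-(k - b)² / (2 b)) ≤ 1 / 2`. Hence
`E χ(G_{1/2}) ≥ (b + 1) / 2 ≥ k / (8 C log k)`.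
-/

open Finset SimpleGraph

attribute [local instance] Classical.propDecidable

/-- The expectation of `f` of a uniformly random spanning subgraph of `G`
(each edge kept independently with probability `1/2`). -/
noncomputable def exHalf {V : Type*} [Fintype V] (G : SimpleGraph V)
    (f : SimpleGraph V → ℕ) : ℝ :=
  (∑ S ∈ G.edgeFinset.powerset,
      (f (SimpleGraph.fromEdgeSet (S : Set (Sym2 V))) : ℝ)) /
    2 ^ G.edgeFinset.card

lemma Nat.sub_one_sq_le_two_mul_choose_two (c : ℕ) : (c - 1) ^ 2 ≤ 2 * c.choose 2 := by
  rw [Nat.choose_two_right, Nat.mul_div_cancel' (Nat.even_mul_pred_self c).two_dvd, sq]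
  exact Nat.mul_le_mul_right _ (Nat.sub_le c 1)

namespace SimpleGraph

variable {V α : Type*}

lemma chromaticNumber_toNat_le_iff_colorable [Finite V] (G : SimpleGraph V) {n : ℕ} :
    G.chromaticNumber.toNat ≤ n ↔ G.Colorable n :=
  ⟨fun h => G.colorable_chromaticNumber_of_fintype.mono h,
    fun h => ENat.toNat_le_of_le_natCast h.chromaticNumber_le⟩

/-- Otherwise the colour classes `i` and `j` could be merged. -/
lemma Coloring.exists_adj_of_chromaticNumber_eq [Fintype α] {H : SimpleGraph V}
    (Co : H.Coloring α) (hχ : H.chromaticNumber = Fintype.card α) {i j : α} (hij : i ≠ j) :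
    ∃ u v, H.Adj u v ∧ Co u = i ∧ Co v = j := by
  by_contra! hno
  let merged : H.Coloring {x : α // x ≠ j} :=
    .mk (fun v => if h : Co v = j then ⟨i, hij⟩ else ⟨Co v, h⟩) fun {u v} huv heq => by
      have hval := congrArg Subtype.val heq
      split_ifs at hval with hu hv hv
      · exact Co.valid huv (hu.trans hv.symm)
      · exact hno v u huv.symm hval.symm hu
      · exact hno u v huv hval hv
      · exact Co.valid huv hval
  have hle := merged.colorable.chromaticNumber_le
  have hpos : 0 < Fintype.card α := Fintype.card_pos_iff.2 ⟨i⟩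
  rw [hχ, Fintype.card_subtype_compl, Fintype.card_subtype_eq, Nat.cast_le] at hle
  omega

lemma choose_two_chromaticNumber_toNat_le_card_edgeFinset [Fintype V] (H : SimpleGraph V) :
    H.chromaticNumber.toNat.choose 2 ≤ #H.edgeFinset := by
  set c := H.chromaticNumber.toNat
  obtain ⟨Co⟩ := H.colorable_chromaticNumber_of_fintype
  have hχ : H.chromaticNumber = Fintype.card (Fin c) := by
    rw [Fintype.card_fin, ENat.natCast_toNat
      (H.chromaticNumber_ne_top_iff_exists.2 ⟨_, H.colorable_of_fintype⟩)]
  rw [← Fintype.card_fin c, ← Sym2.card_subtype_not_diag, Fintype.card_subtype]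
  refine card_le_card_of_surjOn (Sym2.map Co) fun z hz => ?_
  induction z using Sym2.ind with
  | h i j =>
    have hij : i ≠ j := by simpa using hz
    obtain ⟨u, v, huv, hu, hv⟩ := Co.exists_adj_of_chromaticNumber_eq hχ hij
    exact ⟨s(u, v), by simpa using huv, by simp [hu, hv]⟩

variable {ι : Type*}

def colorClassGraph (G : SimpleGraph V) (σ : V → ι) (i : ι) : SimpleGraph V where
  Adj u v := G.Adj u v ∧ σ u = i ∧ σ v = i
  symm := ⟨fun _ _ h => ⟨h.1.symm, h.2.2, h.2.1⟩⟩
  loopless := ⟨fun _ h => G.irrefl h.1⟩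

@[simp]
lemma colorClassGraph_adj (G : SimpleGraph V) (σ : V → ι) (i : ι) {u v : V} :
    (G.colorClassGraph σ i).Adj u v ↔ G.Adj u v ∧ σ u = i ∧ σ v = i :=
  Iff.rfl

noncomputable def monochromaticEdges [Fintype V] (G : SimpleGraph V) (σ : V → ι) :
    Finset (Sym2 V) :=
  {e ∈ G.edgeFinset | (e.map σ).IsDiag}

lemma monochromaticEdges_subset [Fintype V] (G : SimpleGraph V) (σ : V → ι) :
    G.monochromaticEdges σ ⊆ G.edgeFinset :=
  filter_subset _ _

noncomputable def colorableEdgeSubsets [Fintype V] (G : SimpleGraph V) (b : ℕ) :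
    Finset (Finset (Sym2 V)) :=
  G.edgeFinset.powerset.filter fun S => (fromEdgeSet (S : Set (Sym2 V))).Colorable b

lemma colorable_sum_chromaticNumber_colorClassGraph [Fintype V] [Fintype ι]
    (G : SimpleGraph V) (σ : V → ι) :
    G.Colorable (∑ i, (G.colorClassGraph σ i).chromaticNumber.toNat) := by
  have Co i := (G.colorClassGraph σ i).colorable_chromaticNumber_of_fintype.some
  let glued : G.Coloring (Σ i, Fin (G.colorClassGraph σ i).chromaticNumber.toNat) :=
    Coloring.mk (fun v => ⟨σ v, Co (σ v) v⟩) fun {u v} huv heq => by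
      obtain ⟨hσ, hco⟩ := Sigma.mk.inj_iff.mp heq
      rw [hσ] at hco
      exact (Co (σ v)).valid ⟨huv, hσ, rfl⟩ (eq_of_heq hco)
  simpa using glued.colorable

lemma sum_card_edgeFinset_colorClassGraph [Fintype V] [Fintype ι] (G : SimpleGraph V)
    (σ : V → ι) : ∑ i, #(G.colorClassGraph σ i).edgeFinset = #(G.monochromaticEdges σ) := by
  rw [← card_biUnion]
  · congr 1
    ext e
    induction e using Sym2.ind with
    | h u v => simp [monochromaticEdges, and_comm, eq_comm]
  · intro i _ j _ hij
    refine Finset.disjoint_left.2 fun e hi hj => ?_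
    induction e using Sym2.ind with
    | h u v =>
      simp only [mem_edgeFinset, mem_edgeSet, colorClassGraph_adj] at hi hj
      exact hij (hi.2.1.symm.trans hj.2.1)

lemma chromaticNumber_sub_card_sq_le [Fintype V] [Fintype ι] (G : SimpleGraph V) (σ : V → ι) :
    (G.chromaticNumber.toNat - Fintype.card ι) ^ 2 ≤
      2 * Fintype.card ι * #(G.monochromaticEdges σ) := by
  set c := fun i => (G.colorClassGraph σ i).chromaticNumber.toNat
  have hχ : G.chromaticNumber.toNat ≤ ∑ i, (c i - 1) + Fintype.card ι :=
    calc G.chromaticNumber.toNat ≤ ∑ i, c i :=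
          (G.chromaticNumber_toNat_le_iff_colorable).2
            (G.colorable_sum_chromaticNumber_colorClassGraph σ)
      _ ≤ ∑ i, (c i - 1 + 1) := sum_le_sum fun i _ => by omega
      _ = ∑ i, (c i - 1) + Fintype.card ι := by simp [sum_add_distrib]
  calc (G.chromaticNumber.toNat - Fintype.card ι) ^ 2 ≤ (∑ i, (c i - 1)) ^ 2 := by
        gcongr; omega
    _ ≤ Fintype.card ι * ∑ i, (c i - 1) ^ 2 := by
        rw [← card_univ]; exact sq_sum_le_card_mul_sum_sq
    _ ≤ Fintype.card ι * ∑ i, 2 * #(G.colorClassGraph σ i).edgeFinset := by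
        gcongr with i
        exact (Nat.sub_one_sq_le_two_mul_choose_two _).trans
          (Nat.mul_le_mul_left 2 (choose_two_chromaticNumber_toNat_le_card_edgeFinset _))
    _ = 2 * Fintype.card ι * #(G.monochromaticEdges σ) := by
        rw [← mul_sum, sum_card_edgeFinset_colorClassGraph]; ring

lemma card_colorableEdgeSubsets_le [Fintype V] (G : SimpleGraph V) (b : ℕ) :
    #(G.colorableEdgeSubsets b) ≤
      ∑ σ : V → Fin b, 2 ^ (#G.edgeFinset - #(G.monochromaticEdges σ)) := by
  calc _ ≤ #(univ.biUnion fun σ : V → Fin b =>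
          (G.edgeFinset \ G.monochromaticEdges σ).powerset) := by
        refine card_le_card fun S hS => ?_
        obtain ⟨hSE, ⟨Co⟩⟩ := mem_filter.1 hS
        rw [mem_powerset] at hSE
        refine mem_biUnion.2 ⟨Co, mem_univ _, mem_powerset.2 fun e he => ?_⟩
        refine mem_sdiff.2 ⟨hSE he, ?_⟩
        induction e using Sym2.ind with
        | h u v =>
          have huv : G.Adj u v := mem_edgeFinset.1 (hSE he)
          have hS : (fromEdgeSet (S : Set (Sym2 V))).Adj u v :=
            (fromEdgeSet_adj _).2 ⟨he, huv.ne⟩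
          simpa [monochromaticEdges, huv] using Co.valid hS
    _ ≤ _ := card_biUnion_le.trans_eq (by
        simp [card_sdiff_of_subset (G.monochromaticEdges_subset _)])

lemma two_mul_card_colorableEdgeSubsets_le [Fintype V] (G : SimpleGraph V) {b : ℕ}
    (hb : 1 ≤ b) {μ : ℝ} (hμ : ∀ σ : V → Fin b, μ ≤ #(G.monochromaticEdges σ))
    (hlog : Fintype.card V * Real.logb 2 b + 1 ≤ μ) :
    2 * (#(G.colorableEdgeSubsets b) : ℝ) ≤ 2 ^ #G.edgeFinset := by
  set m := #G.edgeFinset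
  have hσ (σ : V → Fin b) : (2 : ℝ) ^ (m - #(G.monochromaticEdges σ)) ≤ 2 ^ m * 2 ^ (-μ) := by
    rw [pow_sub₀ _ two_ne_zero (card_le_card (G.monochromaticEdges_subset σ)),
      ← Real.rpow_natCast 2 #(G.monochromaticEdges σ), ← Real.rpow_neg zero_le_two]
    gcongr
    · exact one_le_two
    · exact hμ σ
  have hbμ : (b : ℝ) ^ Fintype.card V * 2 ^ (-μ) ≤ 1 / 2 := by
    have hb0 : (0 : ℝ) < b := by exact_mod_cast hb
    rw [← Real.rpow_logb two_pos one_lt_two.ne' hb0, ← Real.rpow_natCast, ← Real.rpow_mul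
      zero_le_two, ← Real.rpow_add two_pos]
    calc (2 : ℝ) ^ (Real.logb 2 b * Fintype.card V + -μ) ≤ 2 ^ (-1 : ℝ) := by
          gcongr
          · exact one_le_two
          · linarith
      _ = 1 / 2 := by norm_num
  calc 2 * (#(G.colorableEdgeSubsets b) : ℝ)
      ≤ 2 * ∑ σ : V → Fin b, (2 : ℝ) ^ (m - #(G.monochromaticEdges σ)) := by
        gcongr; exact_mod_cast G.card_colorableEdgeSubsets_le b
    _ ≤ 2 * ∑ _σ : V → Fin b, (2 : ℝ) ^ m * 2 ^ (-μ) := by gcongr with σ; exact hσ σ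
    _ = 2 ^ m * (2 * ((b : ℝ) ^ Fintype.card V * 2 ^ (-μ))) := by simp; ring
    _ ≤ 2 ^ m := by nlinarith [pow_pos (two_pos : (0 : ℝ) < 2) m]

end SimpleGraph

section exHalf

variable {V : Type*} [Fintype V]

lemma mul_card_filter_le_exHalf (G : SimpleGraph V) (f : SimpleGraph V → ℕ) (t : ℕ) :
    (t * #(G.edgeFinset.powerset.filter
        fun S : Finset (Sym2 V) => t ≤ f (fromEdgeSet (S : Set (Sym2 V)))) : ℝ) /
      2 ^ #G.edgeFinset ≤ exHalf G f := by
  rw [exHalf]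
  gcongr
  have hmarkov := (card_nsmul_le_sum _ _ t fun S hS => (mem_filter.1 hS).2).trans
    (sum_le_sum_of_subset (f := fun S : Finset (Sym2 V) => f (fromEdgeSet (S : Set (Sym2 V))))
      (filter_subset _ G.edgeFinset.powerset))
  rw [smul_eq_mul, mul_comm] at hmarkov
  exact_mod_cast hmarkov

lemma add_one_div_two_le_exHalf_chromaticNumber (G : SimpleGraph V) {b : ℕ}
    (hb : 2 * (#(G.colorableEdgeSubsets b) : ℝ) ≤ 2 ^ #G.edgeFinset) :
    ((b : ℝ) + 1) / 2 ≤ exHalf G fun H => H.chromaticNumber.toNat := by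
  set P := G.edgeFinset.powerset
  set good := P.filter fun S : Finset (Sym2 V) =>
    b + 1 ≤ (fromEdgeSet (S : Set (Sym2 V))).chromaticNumber.toNat
  have hsplit : 2 ^ #G.edgeFinset ≤ #good + #(G.colorableEdgeSubsets b) := by
    rw [← card_powerset, ← card_filter_add_card_filter_not (s := P)
      fun S : Finset (Sym2 V) => b + 1 ≤ (fromEdgeSet (S : Set (Sym2 V))).chromaticNumber.toNat]
    refine Nat.add_le_add_left (card_le_card fun S hS => ?_) _
    rw [mem_filter] at hS
    rw [colorableEdgeSubsets, mem_filter]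
    exact ⟨hS.1, (chromaticNumber_toNat_le_iff_colorable _).1 (by omega)⟩
  refine le_trans ?_ (mul_card_filter_le_exHalf G _ (b + 1))
  rw [div_le_div_iff₀ two_pos (by positivity)]
  push_cast
  have : (2 : ℝ) ^ #G.edgeFinset ≤ #good + #(G.colorableEdgeSubsets b) := by
    exact_mod_cast hsplit
  nlinarith

end exHalf

lemma two_le_logb_of_one_le_div {k : ℕ} {C : ℝ} (hC : 1 ≤ C)
    (h : 1 ≤ (k : ℝ) / (4 * C * Real.logb 2 k)) : 2 ≤ Real.logb 2 k := by
  have hL : 0 < Real.logb 2 k := by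
    by_contra! hL
    have : (k : ℝ) / (4 * C * Real.logb 2 k) ≤ 0 :=
      div_nonpos_of_nonneg_of_nonpos k.cast_nonneg (by nlinarith)
    linarith
  have hk : 1 < (k : ℝ) := by
    by_contra! hk
    exact hL.not_ge (Real.logb_nonpos one_lt_two k.cast_nonneg hk)
  have hL1 : 1 ≤ Real.logb 2 k := by
    rw [Real.le_logb_iff_rpow_le one_lt_two (by linarith), Real.rpow_one]
    exact_mod_cast Nat.succ_le_of_lt (by exact_mod_cast hk : 1 < k)
  rw [one_le_div (by positivity)] at h
  rw [Real.le_logb_iff_rpow_le one_lt_two (by linarith)]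
  calc (2 : ℝ) ^ (2 : ℝ) = 4 := by norm_num
    _ ≤ 4 * C * Real.logb 2 k := by nlinarith
    _ ≤ k := h

lemma card_mul_logb_add_one_le {n k b : ℕ} {C L : ℝ} (hb : 1 ≤ b) (hbk : b * (4 * C * L) ≤ k)
    (hn : n ≤ C * k) (hlog : Real.logb 2 b ≤ L) (hCL : 2 ≤ C * L) :
    n * Real.logb 2 b + 1 ≤ ((k : ℝ) - b) ^ 2 / (2 * b) := by
  have hb0 : (1 : ℝ) ≤ b := by exact_mod_cast hb
  have hlog0 : 0 ≤ Real.logb 2 b := Real.logb_nonneg one_lt_two hb0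
  have h8 : 8 * (b : ℝ) ≤ k := by nlinarith
  have hnlog : n * Real.logb 2 b ≤ C * k * L := mul_le_mul hn hlog hlog0 (by nlinarith)
  rw [le_div_iff₀ (by positivity)]
  nlinarith

/-- If `G` is an `n`-vertex graph with `χ(G) = k` and `n ≤ Ck` for some `C ≥ 1`
(with `k` large enough that `d = k/(4C log k) ≥ 1`, `log` base 2), then the
expected chromatic number of the random subgraph `G_{1/2}` is at least
`k/(8C log k)`. -/
theorem stmt_5 {V : Type*} [Fintype V] (G : SimpleGraph V) (n k : ℕ) (C : ℝ)
    (hn : Fintype.card V = n) (hk : G.chromaticNumber = k)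
    (hC : 1 ≤ C) (hnk : (n : ℝ) ≤ C * k)
    (hbig : 1 ≤ (k : ℝ) / (4 * C * Real.logb 2 k)) :
    (k : ℝ) / (8 * C * Real.logb 2 k) ≤
      exHalf G (fun H => H.chromaticNumber.toNat) := by
  set L := Real.logb 2 k
  have hL : 2 ≤ L := two_le_logb_of_one_le_div hC hbig
  have hCL : 0 < 4 * C * L := by positivity
  set b := ⌊(k : ℝ) / (4 * C * L)⌋₊
  have hb : 1 ≤ b := (Nat.one_le_floor_iff _).2 hbig
  have hbk : b * (4 * C * L) ≤ k := (le_div_iff₀ hCL).1 (Nat.floor_le (by positivity))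
  have hb_le_k : b ≤ k := by
    have : (b : ℝ) ≤ k := by nlinarith
    exact_mod_cast this
  have hmono (σ : V → Fin b) : ((k : ℝ) - b) ^ 2 / (2 * b) ≤ #(G.monochromaticEdges σ) := by
    have := G.chromaticNumber_sub_card_sq_le σ
    rw [hk, ENat.toNat_natCast, Fintype.card_fin] at this
    rw [div_le_iff₀ (by positivity), ← Nat.cast_sub hb_le_k]
    exact_mod_cast (by linarith : (k - b) ^ 2 ≤ #(G.monochromaticEdges σ) * (2 * b))
  have hlog : Real.logb 2 b ≤ L := Real.logb_le_logb_of_le one_lt_two (by positivity)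
    (by exact_mod_cast hb_le_k)
  have hbad := G.two_mul_card_colorableEdgeSubsets_le hb hmono
    (hn ▸ card_mul_logb_add_one_le hb hbk hnk hlog (by nlinarith))
  calc (k : ℝ) / (8 * C * L) = (k : ℝ) / (4 * C * L) / 2 := by ring
    _ ≤ ((b : ℝ) + 1) / 2 := by gcongr; exact (Nat.lt_floor_add_one _).le
    _ ≤ _ := add_one_div_two_le_exHalf_chromaticNumber G hbad
end

section
/- If χ(G) = k and d³ ≤ k, then every coloring of the vertices of G with d³ colors has at least k(k − d³)/(2d³) monochromatic edges. -/
open Finset SimpleGraph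

attribute [local instance] Classical.propDecidable

/-- A finite graph with chromatic number `m` has at least `m.choose 2` edges. -/
lemma aux_choose_le_edges {W : Type*} [Fintype W] (H : SimpleGraph W) :
    (H.chromaticNumber.toNat).choose 2 ≤ H.edgeFinset.card := by
  classical
  set m := H.chromaticNumber.toNat with hm
  obtain ⟨C⟩ := H.colorable_chromaticNumber_of_fintype
  have hχ : H.chromaticNumber = (m : ℕ∞) := by
    rw [hm]
    exact (ENat.coe_toNat (by
      intro h
      exact (chromaticNumber_ne_top_iff_exists.mpr ⟨_, H.colorable_of_fintype⟩) h)).symm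
  have key : ∀ i j : Fin m, i ≠ j → ∃ e ∈ H.edgeFinset, Sym2.map C e = s(i, j) := by
    intro i j hij
    by_contra h
    push_neg at h
    have hC' : H.Colorable (m - 1) := by
      have cardeq : Fintype.card {x : Fin m // ¬ (x = j)} = m - 1 := by
        simp [Fintype.card_subtype_compl]
      rw [← cardeq]
      refine Coloring.colorable (Coloring.mk
        (fun v => if hv : C v = j then ⟨i, fun hh => hij (by simpa using hh)⟩
          else ⟨C v, hv⟩) ?_)
      intro u v huv heq
      by_cases hu : C u = j <;> by_cases hv : C v = j
      · exact C.valid huv (hu.trans hv.symm)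
      · have : (i : Fin m) = C v := by simpa [hu, hv] using congrArg Subtype.val heq
        refine h s(u, v) (by simpa [edgeFinset] using huv) ?_
        simp [hu, ← this, Sym2.eq_swap]
      · have : C u = (i : Fin m) := by simpa [hu, hv] using congrArg Subtype.val heq
        exact h s(u, v) (by simpa [edgeFinset] using huv) (by simp [this, hv])
      · exact C.valid huv (by simpa [hu, hv] using congrArg Subtype.val heq)
    have hm2 : 1 < m := by
      have : Nontrivial (Fin m) := ⟨⟨i, j, hij⟩⟩
      simpa using Fintype.one_lt_card (α := Fin m)
    have := hC'.chromaticNumber_le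
    rw [hχ, Nat.cast_le] at this
    omega
  have hsurj : Set.SurjOn (Sym2.map C) ↑H.edgeFinset
      ↑(Finset.univ.filter (fun z : Sym2 (Fin m) => ¬ z.IsDiag)) := by
    intro z hz
    simp only [coe_filter, Set.mem_setOf_eq] at hz
    induction z using Sym2.ind with
    | _ i j =>
      have hij : i ≠ j := by simpa using hz.2
      obtain ⟨e, he, hmap⟩ := key i j hij
      exact ⟨e, by simpa using he, hmap⟩
  have hcard : (Finset.univ.filter (fun z : Sym2 (Fin m) => ¬ z.IsDiag)).card = m.choose 2 := by
    rw [← Fintype.card_subtype]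
    simpa using (Sym2.card_subtype_not_diag (α := Fin m))
  calc m.choose 2 = _ := hcard.symm
    _ ≤ H.edgeFinset.card := Finset.card_le_card_of_surjOn _ hsurj

/-- If `χ(G) = k` and `d³ ≤ k`, then every coloring of the vertices of `G` with
`d³` colors has at least `k(k − d³)/(2d³)` monochromatic edges. -/
theorem stmt_9 {V : Type*} [Fintype V] (G : SimpleGraph V) (k d : ℕ)
    (hk : G.chromaticNumber = k) (hd : d ^ 3 ≤ k) (c : V → Fin (d ^ 3)) :
    (k : ℝ) * ((k : ℝ) - (d : ℝ) ^ 3) / (2 * (d : ℝ) ^ 3) ≤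
      ((G.edgeFinset.filter (fun e => (e.map c).IsDiag)).card : ℝ) := by
  classical
  rcases Nat.eq_zero_or_pos d with hd0 | hdpos
  · subst hd0
    norm_num
  have hN1 : 1 ≤ d ^ 3 := Nat.one_le_iff_ne_zero.mpr (by positivity)
  -- color classes
  let Gi : ∀ i : Fin (d ^ 3), SimpleGraph {v : V // c v = i} := fun i => G.induce {v | c v = i}
  let m : Fin (d ^ 3) → ℕ := fun i => (Gi i).chromaticNumber.toNat
  have Ci : ∀ i, (Gi i).Coloring (Fin (m i)) := fun i =>
    ((Gi i).colorable_chromaticNumber_of_fintype).some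
  have congrCi : ∀ (i j : Fin (d ^ 3)), i = j → ∀ (v : V) (p : c v = i) (q : c v = j),
      ((Ci i) ⟨v, p⟩ : ℕ) = ((Ci j) ⟨v, q⟩ : ℕ) := by
    rintro i _ rfl v p q; rfl
  have sigma_eq : ∀ (i j : Fin (d ^ 3)) (a : Fin (m i)) (b : Fin (m j)),
      (⟨i, a⟩ : Σ t, Fin (m t)) = ⟨j, b⟩ → i = j ∧ (a : ℕ) = (b : ℕ) := by
    rintro i j a b h
    obtain ⟨h1, h2⟩ := Sigma.mk.inj_iff.mp h
    subst h1
    exact ⟨rfl, congrArg Fin.val (eq_of_heq h2)⟩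
  -- Step 1 : k ≤ ∑ m i
  have hkS : k ≤ ∑ i, m i := by
    have col : G.Colorable (Fintype.card (Σ i : Fin (d ^ 3), Fin (m i))) := by
      refine Coloring.colorable (Coloring.mk (fun v => ⟨c v, Ci (c v) ⟨v, rfl⟩⟩) ?_)
      intro u v huv heq
      obtain ⟨h1, h2⟩ := sigma_eq _ _ _ _ heq
      have h3 := congrCi (c v) (c u) h1.symm v rfl h1.symm
      have : Ci (c u) ⟨u, rfl⟩ = Ci (c u) ⟨v, h1.symm⟩ := Fin.ext (h2.trans h3)
      exact (Ci (c u)).valid (by simpa [Gi] using huv) this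
    have := col.chromaticNumber_le
    rw [hk] at this
    have := Nat.cast_le.mp this
    simpa [Fintype.card_sigma] using this
  -- Step 2 : ∑ (m i).choose 2 ≤ number of monochromatic edges
  have hES : ∑ i, (m i).choose 2 ≤ (G.edgeFinset.filter (fun e => (e.map c).IsDiag)).card := by
    have hsub : (Finset.univ.biUnion fun i : Fin (d ^ 3) =>
        ((Gi i).edgeFinset).image (Sym2.map Subtype.val)) ⊆
        G.edgeFinset.filter (fun e => (e.map c).IsDiag) := by
      intro e he
      simp only [mem_biUnion, mem_image] at he
      obtain ⟨i, -, f, hf, rfl⟩ := he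
      induction f using Sym2.ind with
      | _ u v =>
        have hadj : G.Adj u.1 v.1 := by
          simpa [Gi, edgeFinset] using hf
        simp only [mem_filter, Sym2.map_pair_eq, mem_edgeFinset, mem_edgeSet]
        exact ⟨hadj, by simp [u.2, v.2]⟩
    have hdisj : ∀ i ∈ Finset.univ, ∀ j ∈ Finset.univ, i ≠ j →
        Disjoint (((Gi i).edgeFinset).image (Sym2.map Subtype.val))
          (((Gi j).edgeFinset).image (Sym2.map Subtype.val)) := by
      intro i _ j _ hij
      rw [Finset.disjoint_left]
      intro e hei hej
      simp only [mem_image] at hei hej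
      obtain ⟨f, -, rfl⟩ := hei
      obtain ⟨g, -, hg⟩ := hej
      induction f using Sym2.ind with
      | _ u v =>
        induction g using Sym2.ind with
        | _ x y =>
          rw [Sym2.map_pair_eq, Sym2.map_pair_eq, Sym2.eq_iff] at hg
          rcases hg with ⟨h1, -⟩ | ⟨h1, -⟩
          · exact hij ((u.2.symm.trans (congrArg c h1).symm).trans x.2)
          · exact hij ((v.2.symm.trans (congrArg c h1).symm).trans x.2)
    calc ∑ i, (m i).choose 2
        ≤ ∑ i, ((Gi i).edgeFinset).card :=
          Finset.sum_le_sum fun i _ => aux_choose_le_edges (Gi i)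
      _ = ∑ i, (((Gi i).edgeFinset).image (Sym2.map Subtype.val)).card := by
          refine Finset.sum_congr rfl fun i _ => ?_
          rw [Finset.card_image_of_injective _ (Sym2.map.injective Subtype.val_injective)]
      _ = (Finset.univ.biUnion fun i : Fin (d ^ 3) =>
            ((Gi i).edgeFinset).image (Sym2.map Subtype.val)).card :=
          (Finset.card_biUnion hdisj).symm
      _ ≤ _ := Finset.card_le_card hsub
  -- Step 3 : real arithmetic
  have h1 : ∑ i, ((m i : ℝ) * ((m i : ℝ) - 1) / 2)
      ≤ ((G.edgeFinset.filter (fun e => (e.map c).IsDiag)).card : ℝ) := by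
    calc ∑ i, ((m i : ℝ) * ((m i : ℝ) - 1) / 2)
        = ∑ i, (((m i).choose 2 : ℕ) : ℝ) := by
          refine Finset.sum_congr rfl fun i _ => ?_
          rw [Nat.cast_choose_two]
      _ = ((∑ i, (m i).choose 2 : ℕ) : ℝ) := by push_cast; ring
      _ ≤ _ := by exact_mod_cast hES
  have hcheb : (∑ i, (m i : ℝ)) ^ 2 ≤ ((d ^ 3 : ℕ) : ℝ) * ∑ i, (m i : ℝ) ^ 2 := by
    have := sq_sum_le_card_mul_sum_sq (s := (Finset.univ : Finset (Fin (d ^ 3))))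
      (f := fun i => (m i : ℝ))
    simpa using this
  have hSk : (k : ℝ) ≤ ∑ i, (m i : ℝ) := by
    calc (k : ℝ) ≤ ((∑ i, m i : ℕ) : ℝ) := by exact_mod_cast hkS
      _ = ∑ i, (m i : ℝ) := by push_cast; rfl
  have hsum : ∑ i, ((m i : ℝ) * ((m i : ℝ) - 1) / 2)
      = ((∑ i, (m i : ℝ) ^ 2) - (∑ i, (m i : ℝ))) / 2 := by
    rw [← Finset.sum_div, ← Finset.sum_sub_distrib]
    congr 1
    exact Finset.sum_congr rfl fun i _ => by ring
  have hNR : (1 : ℝ) ≤ ((d ^ 3 : ℕ) : ℝ) := by exact_mod_cast hN1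
  have hkN : ((d ^ 3 : ℕ) : ℝ) ≤ (k : ℝ) := by exact_mod_cast hd
  have hdN : ((d : ℝ)) ^ 3 = ((d ^ 3 : ℕ) : ℝ) := by push_cast; ring
  rw [hdN, div_le_iff₀ (by linarith)]
  rw [hsum] at h1
  set S := ∑ i, (m i : ℝ) with hS
  set Q := ∑ i, (m i : ℝ) ^ 2 with hQ
  set E := ((G.edgeFinset.filter (fun e => (e.map c).IsDiag)).card : ℝ) with hE
  set NR := ((d ^ 3 : ℕ) : ℝ) with hNRdef
  nlinarith [mul_nonneg (sub_nonneg.mpr hSk) (by linarith : (0:ℝ) ≤ S + (k:ℝ) - NR),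
    mul_le_mul_of_nonneg_left h1 (by linarith : (0:ℝ) ≤ NR)]
end

section
/- For any graph G with χ(G) = k, the expected chromatic number of the random subgraph G_{1/2} satisfies E[χ(G_{1/2})] ≥ √k. -/
open Finset SimpleGraph

attribute [local instance] Classical.propDecidable

lemma colorable_sup_mul {V : Type*} {H1 H2 : SimpleGraph V} {m n : ℕ}
    (h1 : H1.Colorable m) (h2 : H2.Colorable n) : (H1 ⊔ H2).Colorable (m * n) := by
  obtain ⟨c1⟩ := h1
  obtain ⟨c2⟩ := h2
  have C : (H1 ⊔ H2).Coloring (Fin m × Fin n) :=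
    SimpleGraph.Coloring.mk (fun v => (c1 v, c2 v)) (by
      rintro v w (h | h) he
      · exact c1.valid h (congrArg Prod.fst he)
      · exact c2.valid h (congrArg Prod.snd he))
  simpa using C.colorable

lemma key {V : Type*} [Fintype V] (G : SimpleGraph V) (k : ℕ)
    (hk : G.chromaticNumber = k) (S : Finset (Sym2 V)) (hS : S ∈ G.edgeFinset.powerset) :
    (k : ℝ) ≤ ((fromEdgeSet (S : Set (Sym2 V))).chromaticNumber.toNat : ℝ) *
      ((fromEdgeSet ((G.edgeFinset \ S : Finset (Sym2 V)) : Set (Sym2 V))).chromaticNumber.toNat : ℝ) := by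
  rw [mem_powerset] at hS
  set H1 := fromEdgeSet (S : Set (Sym2 V))
  set H2 := fromEdgeSet ((G.edgeFinset \ S : Finset (Sym2 V)) : Set (Sym2 V))
  have hsup : G ≤ H1 ⊔ H2 := by
    rw [← fromEdgeSet_union]
    have : (S : Set (Sym2 V)) ∪ ((G.edgeFinset \ S : Finset (Sym2 V)) : Set (Sym2 V)) = G.edgeSet := by
      rw [← coe_union, Finset.union_sdiff_of_subset hS, coe_edgeFinset]
    rw [this, fromEdgeSet_edgeSet]
  have c1 := H1.colorable_chromaticNumber_of_fintype
  have c2 := H2.colorable_chromaticNumber_of_fintype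
  have hG : G.Colorable (H1.chromaticNumber.toNat * H2.chromaticNumber.toNat) :=
    (colorable_sup_mul c1 c2).mono_left hsup
  have h := hG.chromaticNumber_le
  rw [hk] at h
  have : k ≤ H1.chromaticNumber.toNat * H2.chromaticNumber.toNat := by exact_mod_cast h
  exact_mod_cast this

lemma amgm {a b k : ℝ} (ha : 0 ≤ a) (hb : 0 ≤ b) (hk : 0 ≤ k) (h : k ≤ a * b) :
    2 * Real.sqrt k ≤ a + b := by
  have hs : Real.sqrt k ^ 2 = k := Real.sq_sqrt hk
  have hsn := Real.sqrt_nonneg k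
  nlinarith [sq_nonneg (a - b), sq_nonneg (a + b - 2 * Real.sqrt k)]

/-- For any graph `G` with `χ(G) = k`, the expected chromatic number of the
random subgraph `G_{1/2}` satisfies `E[χ(G_{1/2})] ≥ √k`. -/
theorem stmt_11 {V : Type*} [Fintype V] (G : SimpleGraph V) (k : ℕ)
    (hk : G.chromaticNumber = k) :
    Real.sqrt k ≤ exHalf G (fun H => H.chromaticNumber.toNat) := by
  unfold exHalf
  rw [le_div_iff₀ (by positivity)]
  set f : Finset (Sym2 V) → ℝ :=
    fun S => ((fromEdgeSet (S : Set (Sym2 V))).chromaticNumber.toNat : ℝ) with hf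
  have hsym : ∑ S ∈ G.edgeFinset.powerset, f S
      = ∑ S ∈ G.edgeFinset.powerset, f (G.edgeFinset \ S) := by
    apply Finset.sum_nbij' (fun S => G.edgeFinset \ S) (fun S => G.edgeFinset \ S)
    · intro S hS; rw [mem_powerset] at *; exact sdiff_subset
    · intro S hS; rw [mem_powerset] at *; exact sdiff_subset
    · intro S hS; rw [mem_powerset] at hS; exact Finset.sdiff_sdiff_eq_self hS
    · intro S hS; rw [mem_powerset] at hS; exact Finset.sdiff_sdiff_eq_self hS
    · intro S hS; rw [mem_powerset] at hS; rw [Finset.sdiff_sdiff_eq_self hS]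
  have h2 : 2 * (Real.sqrt k * 2 ^ G.edgeFinset.card)
      ≤ 2 * ∑ S ∈ G.edgeFinset.powerset, f S := by
    have : 2 * ∑ S ∈ G.edgeFinset.powerset, f S
        = ∑ S ∈ G.edgeFinset.powerset, (f S + f (G.edgeFinset \ S)) := by
      rw [Finset.sum_add_distrib, ← hsym]; ring
    rw [this]
    have card_eq : (G.edgeFinset.powerset.card : ℝ) = 2 ^ G.edgeFinset.card := by
      rw [card_powerset]; push_cast; ring
    calc 2 * (Real.sqrt k * 2 ^ G.edgeFinset.card)
        = ∑ _S ∈ G.edgeFinset.powerset, 2 * Real.sqrt k := by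
          rw [Finset.sum_const, nsmul_eq_mul, card_eq]; ring
      _ ≤ _ := by
          apply Finset.sum_le_sum
          intro S hS
          exact amgm (by positivity) (by positivity) (by positivity) (key G k hk S hS)
  linarith
end
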